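/- For any real numbers f₋₂, f₋₁, f₀, f₁, f₂, any x_i ∈ ℝ and any Δx > 0, there exists a unique polynomial P of degree at most 4 such that (1/Δx)∫ over the cell [x_i+(j−1/2)Δx, x_i+(j+1/2)Δx] of P equals f_j for every j ∈ {−2,−1,0,1,2}; moreover this P satisfies P(x_i + Δx/2) = (1/60)(2f₋₂ − 13f₋₁ + 47f₀ + 27f₁ − 3f₂). -/

import Mathlib

open intervalIntegral Polynomial

/-- `P` reproduces the cell averages `fm2, fm1, f0, f1, f2` on the five cells
`[x_i + (j−1/2)Δx, x_i + (j+1/2)Δx]`, `j = −2,…,2`. -/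
def MatchesCellAverages (P : Polynomial ℝ) (fm2 fm1 f0 f1 f2 xi Δx : ℝ) : Prop :=
    ((1/Δx) * ∫ ξ in (xi + ((-2:ℝ) - 1/2)*Δx)..(xi + ((-2:ℝ) + 1/2)*Δx), P.eval ξ) = fm2
  ∧ ((1/Δx) * ∫ ξ in (xi + ((-1:ℝ) - 1/2)*Δx)..(xi + ((-1:ℝ) + 1/2)*Δx), P.eval ξ) = fm1
  ∧ ((1/Δx) * ∫ ξ in (xi + ((0:ℝ) - 1/2)*Δx)..(xi + ((0:ℝ) + 1/2)*Δx), P.eval ξ) = f0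
  ∧ ((1/Δx) * ∫ ξ in (xi + ((1:ℝ) - 1/2)*Δx)..(xi + ((1:ℝ) + 1/2)*Δx), P.eval ξ) = f1
  ∧ ((1/Δx) * ∫ ξ in (xi + ((2:ℝ) - 1/2)*Δx)..(xi + ((2:ℝ) + 1/2)*Δx), P.eval ξ) = f2

/-! The substitution `ξ = xi + Δx t` turns the average of `P` over the `j`-th cell into the
integral of `P (xi + Δx t)` over the unit cell `[j - 1/2, j + 1/2]`, and `P ↦ P (xi + Δx X)` is a
degree-preserving automorphism of `ℝ[X]`. On unit cells the five averages of a quartic are an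
invertible linear function of its five coefficients (the moments of `t ^ k` over the cells), so
the reconstruction exists, is unique and is explicit; evaluating it at `t = 1/2` gives the flux. -/

theorem Polynomial.integral_eval_eq_sum_range {p : ℝ[X]} {n : ℕ} (hp : p.natDegree < n)
    (a b : ℝ) :
    ∫ x in a..b, p.eval x =
      ∑ i ∈ Finset.range n, p.coeff i * ((b ^ (i + 1) - a ^ (i + 1)) / (i + 1)) := by
  simp_rw [eval_eq_sum_range' hp]
  rw [integral_finsetSum fun i _ =>
    (by fun_prop : Continuous fun x : ℝ => p.coeff i * x ^ i).intervalIntegrable a b]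
  simp only [integral_const_mul, integral_pow]

theorem Polynomial.natDegree_comp_C_mul_X_add_C {K : Type*} [Field K] (p : K[X]) {a : K}
    (ha : a ≠ 0) (b : K) : (p.comp (C a * X + C b)).natDegree = p.natDegree := by
  rw [natDegree_comp, natDegree_linear ha, mul_one]

noncomputable def cellAverage (P : ℝ[X]) (xi Δx j : ℝ) : ℝ :=
  (1 / Δx) * ∫ ξ in (xi + (j - 1/2) * Δx)..(xi + (j + 1/2) * Δx), P.eval ξ

theorem matchesCellAverages_iff (P : ℝ[X]) (fm2 fm1 f0 f1 f2 xi Δx : ℝ) :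
    MatchesCellAverages P fm2 fm1 f0 f1 f2 xi Δx ↔
      cellAverage P xi Δx (-2) = fm2 ∧ cellAverage P xi Δx (-1) = fm1 ∧
        cellAverage P xi Δx 0 = f0 ∧ cellAverage P xi Δx 1 = f1 ∧ cellAverage P xi Δx 2 = f2 :=
  Iff.rfl

theorem cellAverage_comp (P : ℝ[X]) (xi : ℝ) {Δx : ℝ} (hΔx : Δx ≠ 0) (j : ℝ) :
    cellAverage (P.comp (C Δx * X + C xi)) 0 1 j = cellAverage P xi Δx j := by
  simp only [cellAverage, eval_comp, eval_add, eval_mul, eval_C, eval_X, add_comm (Δx * _)]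
  rw [integral_comp_add_mul (fun ξ => P.eval ξ) hΔx, smul_eq_mul]
  ring_nf

theorem matchesCellAverages_comp_iff (P : ℝ[X]) (fm2 fm1 f0 f1 f2 xi : ℝ) {Δx : ℝ}
    (hΔx : Δx ≠ 0) :
    MatchesCellAverages (P.comp (C Δx * X + C xi)) fm2 fm1 f0 f1 f2 0 1 ↔
      MatchesCellAverages P fm2 fm1 f0 f1 f2 xi Δx := by
  simp only [matchesCellAverages_iff, cellAverage_comp P xi hΔx]

theorem cellAverage_zero_one {Q : ℝ[X]} (hQ : Q.natDegree < 5) (j : ℝ) :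
    cellAverage Q 0 1 j = Q.coeff 0 + Q.coeff 1 * j + Q.coeff 2 * (j ^ 2 + 1/12)
      + Q.coeff 3 * (j ^ 3 + j / 4) + Q.coeff 4 * (j ^ 4 + j ^ 2 / 2 + 1/80) := by
  simp only [cellAverage, integral_eval_eq_sum_range hQ, Finset.sum_range_succ,
    Finset.sum_range_zero]
  norm_num
  ring

/-- The coefficients invert the moment system of `cellAverage_zero_one` at `j = -2, …, 2`. -/
noncomputable def unitCellReconstruction (fm2 fm1 f0 f1 f2 : ℝ) : ℝ[X] :=
  C ((3/640)*fm2 - (29/480)*fm1 + (1067/960)*f0 - (29/480)*f1 + (3/640)*f2)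
    + C ((5/48)*fm2 - (17/24)*fm1 + (17/24)*f1 - (5/48)*f2) * X
    + C (-(1/16)*fm2 + (3/4)*fm1 - (11/8)*f0 + (3/4)*f1 - (1/16)*f2) * X ^ 2
    + C (-(1/12)*fm2 + (1/6)*fm1 - (1/6)*f1 + (1/12)*f2) * X ^ 3
    + C ((1/24)*fm2 - (1/6)*fm1 + (1/4)*f0 - (1/6)*f1 + (1/24)*f2) * X ^ 4

section
variable (fm2 fm1 f0 f1 f2 : ℝ)

theorem natDegree_unitCellReconstruction_lt :
    (unitCellReconstruction fm2 fm1 f0 f1 f2).natDegree < 5 := by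
  have : (unitCellReconstruction fm2 fm1 f0 f1 f2).natDegree ≤ 4 := by
    unfold unitCellReconstruction; compute_degree
  omega

theorem matchesCellAverages_unitCellReconstruction :
    MatchesCellAverages (unitCellReconstruction fm2 fm1 f0 f1 f2) fm2 fm1 f0 f1 f2 0 1 := by
  simp only [matchesCellAverages_iff,
    cellAverage_zero_one (natDegree_unitCellReconstruction_lt fm2 fm1 f0 f1 f2)]
  simp only [unitCellReconstruction, coeff_add, coeff_C_mul, coeff_X_pow, coeff_C, coeff_X]
  norm_num
  refine ⟨?_, ?_, ?_, ?_, ?_⟩ <;> ring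

theorem eq_unitCellReconstruction {Q : ℝ[X]} (hQ : Q.natDegree < 5)
    (h : MatchesCellAverages Q fm2 fm1 f0 f1 f2 0 1) :
    Q = unitCellReconstruction fm2 fm1 f0 f1 f2 := by
  simp only [matchesCellAverages_iff, cellAverage_zero_one hQ] at h
  obtain ⟨h₁, h₂, h₃, h₄, h₅⟩ := h
  ext n
  obtain hn | hn := lt_or_ge n 5
  · simp only [unitCellReconstruction, coeff_add, coeff_C_mul, coeff_X_pow, coeff_C, coeff_X]
    interval_cases n <;> norm_num
    · linear_combination (3/640)*h₁ - (29/480)*h₂ + (1067/960)*h₃ - (29/480)*h₄ + (3/640)*h₅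
    · linear_combination (5/48)*h₁ - (17/24)*h₂ + (17/24)*h₄ - (5/48)*h₅
    · linear_combination -(1/16)*h₁ + (3/4)*h₂ - (11/8)*h₃ + (3/4)*h₄ - (1/16)*h₅
    · linear_combination -(1/12)*h₁ + (1/6)*h₂ - (1/6)*h₄ + (1/12)*h₅
    · linear_combination (1/24)*h₁ - (1/6)*h₂ + (1/4)*h₃ - (1/6)*h₄ + (1/24)*h₅
  · rw [coeff_eq_zero_of_natDegree_lt (hQ.trans_le hn), coeff_eq_zero_of_natDegree_lt
      ((natDegree_unitCellReconstruction_lt fm2 fm1 f0 f1 f2).trans_le hn)]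

theorem eval_unitCellReconstruction_half :
    (unitCellReconstruction fm2 fm1 f0 f1 f2).eval (1/2)
      = (1/60) * (2*fm2 - 13*fm1 + 47*f0 + 27*f1 - 3*f2) := by
  simp only [unitCellReconstruction, eval_add, eval_mul, eval_C, eval_X, eval_pow]
  ring

theorem matchesCellAverages_zero_one_iff {Q : ℝ[X]} (hQ : Q.natDegree < 5) :
    MatchesCellAverages Q fm2 fm1 f0 f1 f2 0 1 ↔ Q = unitCellReconstruction fm2 fm1 f0 f1 f2 :=
  ⟨eq_unitCellReconstruction fm2 fm1 f0 f1 f2 hQ,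
    fun h => h ▸ matchesCellAverages_unitCellReconstruction fm2 fm1 f0 f1 f2⟩

end

/-- There is a unique polynomial of degree at most `4` matching the five
prescribed cell averages, and any such polynomial evaluates at the right
interface `x_i + Δx/2` to the five-point linear WENO flux formula. -/
theorem weno5_degree_four_reconstruction (fm2 fm1 f0 f1 f2 xi Δx : ℝ) (hΔx : 0 < Δx) :
    (∃! P : Polynomial ℝ, P.degree ≤ 4 ∧ MatchesCellAverages P fm2 fm1 f0 f1 f2 xi Δx)
    ∧ (∀ P : Polynomial ℝ, P.degree ≤ 4 → MatchesCellAverages P fm2 fm1 f0 f1 f2 xi Δx →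
        P.eval (xi + Δx/2) = (1/60) * (2*fm2 - 13*fm1 + 47*f0 + 27*f1 - 3*f2)) := by
  let := invertibleOfNonzero hΔx.ne'
  let e := algEquivCMulXAddC Δx xi
  have he (P : ℝ[X]) : e P = P.comp (C Δx * X + C xi) := (comp_eq_aeval).symm
  have hdeg (P : ℝ[X]) : P.degree ≤ 4 ↔ (e P).natDegree < 5 := by
    rw [he, natDegree_comp_C_mul_X_add_C P hΔx.ne', Nat.lt_succ_iff, natDegree_le_iff_degree_le]
    rfl
  have hmatch (P : ℝ[X]) (hP : P.degree ≤ 4) :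
      MatchesCellAverages P fm2 fm1 f0 f1 f2 xi Δx ↔
        e P = unitCellReconstruction fm2 fm1 f0 f1 f2 := by
    rw [← matchesCellAverages_comp_iff P _ _ _ _ _ xi hΔx.ne', ← he]
    exact matchesCellAverages_zero_one_iff _ _ _ _ _ ((hdeg P).1 hP)
  have hsol : (e.symm (unitCellReconstruction fm2 fm1 f0 f1 f2)).degree ≤ 4 := by
    rw [hdeg, e.apply_symm_apply]
    exact natDegree_unitCellReconstruction_lt _ _ _ _ _
  refine ⟨⟨_, ⟨hsol, (hmatch _ hsol).2 (e.apply_symm_apply _)⟩, ?_⟩, ?_⟩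
  · rintro P ⟨hP, hPm⟩
    exact e.eq_symm_apply.2 ((hmatch P hP).1 hPm)
  · intro P hP hPm
    have hev : P.eval (xi + Δx / 2) = (e P).eval (1 / 2) := by
      rw [he, eval_comp]
      congr 1
      simp only [eval_add, eval_mul, eval_C, eval_X]
      ring
    rw [hev, (hmatch P hP).1 hPm, eval_unitCellReconstruction_half]
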